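/- With notation as in the Dieudonné-module setup over an algebraically closed field k of characteristic p > 0: for x₁, x₂, y₁, y₂ ∈ k^×, the Dieudonné modules M_{(x₁,x₂)} and M_{(y₁,y₂)} are isomorphic (there is a W-linear bijection between them commuting with F and V) if and only if the element z := (x₂ y₁)·(x₁ y₂)^{-1} ∈ k^× satisfies z^{p³} = z, i.e. if and only if x₂/x₁ and y₂/y₁ differ by multiplication by an element of 𝔽_{p³}^×. -/
import Mathlib


noncomputable section

namespace Stmt10

variable (p : ℕ) [Fact p.Prime] (k : Type) [Field k] [CharP k p] [IsAlgClosed k]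

/-- The Witt-vector Frobenius `σ`, a ring automorphism of `W = W(k)`. -/
def σ : WittVector p k ≃+* WittVector p k := WittVector.frobeniusEquiv p k

/-- The operator `F` on `N = D₁₂ ⊕ D₂₁ = W^6`. -/
def Fop (x : Fin 6 → WittVector p k) : Fin 6 → WittVector p k :=
  ![(p : WittVector p k) * σ p k (x 1), (p : WittVector p k) * σ p k (x 2), σ p k (x 0),
    (p : WittVector p k) * σ p k (x 5), σ p k (x 3), σ p k (x 4)]

/-- The operator `V` on `N = D₁₂ ⊕ D₂₁ = W^6`. -/
def Vop (x : Fin 6 → WittVector p k) : Fin 6 → WittVector p k :=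
  ![(p : WittVector p k) * (σ p k).symm (x 2), (σ p k).symm (x 0), (σ p k).symm (x 1),
    (p : WittVector p k) * (σ p k).symm (x 4), (p : WittVector p k) * (σ p k).symm (x 5),
    (σ p k).symm (x 3)]

/-- The `W`-submodule `(F,V)N = F(N) + V(N) = pW × W × W × pW × W × W` of `N = W^6`. -/
def FVN : Submodule (WittVector p k) (Fin 6 → WittVector p k) :=
  Submodule.comap (LinearMap.proj (R := WittVector p k) (φ := fun _ : Fin 6 => WittVector p k) 0)
      (Ideal.span {(p : WittVector p k)}) ⊓
    Submodule.comap (LinearMap.proj (R := WittVector p k) (φ := fun _ : Fin 6 => WittVector p k) 3)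
      (Ideal.span {(p : WittVector p k)})

/-- The vector `([x₁], 0, 0, [x₂], 0, 0) ∈ N`, where `[·]` is the Teichmüller lift. -/
def gen (x : k × k) : Fin 6 → WittVector p k :=
  ![WittVector.teichmuller p x.1, 0, 0, WittVector.teichmuller p x.2, 0, 0]

/-- The `W`-submodule `M_{(x₁,x₂)} = (F,V)N + W·([x₁],0,0,[x₂],0,0)` of `N`. -/
def Mmod (x : k × k) : Submodule (WittVector p k) (Fin 6 → WittVector p k) :=
  FVN p k ⊔ Submodule.span (WittVector p k) {gen p k x}


set_option linter.unusedSectionVars false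
set_option maxHeartbeats 1000000

local notation "W" => WittVector p k
local notation "pW" => Ideal.span {(p : W)}
local notation "τ" => WittVector.teichmuller p

/-! ### Basic facts about `W = W(k)` -/

lemma sigma_p : σ p k (p : W) = (p : W) := map_natCast _ p

lemma sigma_symm_p : (σ p k).symm (p : W) = (p : W) := map_natCast _ p

lemma res_sigma (a : W) :
    WittVector.constantCoeff (σ p k a) = (WittVector.constantCoeff a) ^ p := by
  simpa [σ, WittVector.constantCoeff] using WittVector.coeff_frobenius_charP a 0

lemma res_teich (x : k) : WittVector.constantCoeff (WittVector.teichmuller p x) = x :=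
  WittVector.teichmuller_coeff_zero p x

lemma mem_pW_iff (a : W) : a ∈ pW ↔ WittVector.constantCoeff a = 0 := by
  constructor
  · rw [Ideal.mem_span_singleton]
    rintro ⟨c, rfl⟩
    simp only [map_mul]
    simp [WittVector.constantCoeff, WittVector.coeff_p_zero]
  · intro h
    rcases eq_or_ne a 0 with rfl | ha
    · exact Submodule.zero_mem _
    obtain ⟨m, b, hb, rfl⟩ := WittVector.exists_eq_pow_p_mul a ha
    rcases Nat.eq_zero_or_pos m with rfl | hm
    · simp only [pow_zero, one_mul] at h ⊢
      exact absurd (by simpa [WittVector.constantCoeff] using h) hb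
    · rw [Ideal.mem_span_singleton]
      exact Dvd.dvd.mul_right (dvd_pow_self _ hm.ne') b

lemma eq_zero_of_self_eq_p_mul (a : W) (f : WittVector p k →+* WittVector p k)
    (h : a = (p : W) * f a) : a = 0 := by
  have hdvd : ∀ n : ℕ, (p : W) ^ n ∣ a := by
    intro n
    induction n with
    | zero => simp
    | succ n ih =>
      obtain ⟨c, hc⟩ := ih
      rw [h, hc, map_mul, map_pow, map_natCast]
      exact ⟨f c, by ring⟩
  by_contra ha
  obtain ⟨m, b, hb, hab⟩ := WittVector.exists_eq_pow_p_mul a ha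
  obtain ⟨c, hc⟩ := hdvd (m + 1)
  rw [hab, pow_succ, mul_assoc] at hc
  have hpm : ((p : W) ^ m) ≠ 0 := pow_ne_zero _ (WittVector.p_nonzero p k)
  have hbc : b = (p : W) * c := mul_left_cancel₀ hpm hc
  apply hb
  have hb0 := congrArg (WittVector.constantCoeff) hbc
  simpa [WittVector.constantCoeff, WittVector.coeff_p_zero, WittVector.mul_coeff_zero] using hb0

lemma sigma_mem_pW_iff (a : W) : σ p k a ∈ pW ↔ a ∈ pW := by
  rw [mem_pW_iff, mem_pW_iff, res_sigma, pow_eq_zero_iff (Fact.out : p.Prime).ne_zero]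

lemma sigma_symm_mem_pW_iff (a : W) : (σ p k).symm a ∈ pW ↔ a ∈ pW := by
  rw [← sigma_mem_pW_iff p k ((σ p k).symm a), RingEquiv.apply_symm_apply]

lemma teich_mul_mem_pW_iff (c : k) (hc : c ≠ 0) (a : W) :
    WittVector.teichmuller p c * a ∈ pW ↔ a ∈ pW := by
  rw [mem_pW_iff, mem_pW_iff, map_mul, res_teich, mul_eq_zero]
  simp [hc]

lemma sigma_teich (x : k) :
    σ p k (WittVector.teichmuller p x) = WittVector.teichmuller p (x ^ p) := by
  show WittVector.frobenius _ = _
  rw [WittVector.frobenius_eq_map_frobenius, WittVector.map_teichmuller]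
  rfl

lemma teich_mul_teich_inv (c : k) (hc : c ≠ 0) : τ c * τ c⁻¹ = 1 := by
  rw [← map_mul, mul_inv_cancel₀ hc, map_one]

lemma pow_pow_pow (a : k) : ((a ^ p) ^ p) ^ p = a ^ p ^ 3 := by
  rw [← pow_mul, ← pow_mul]
  congr 1
  ring

lemma final_algebra (x₁ x₂ y₁ y₂ S A B : k) (hx₁ : x₁ ≠ 0) (hx₂ : x₂ ≠ 0)
    (hS : S ≠ 0) (hA0 : A ≠ 0) (hB0 : B ≠ 0) (hA : A ^ p ^ 3 = A) (hB : B ^ p ^ 3 = B)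
    (h1 : y₁ = S * (x₁ * A)) (h2 : y₂ = S * (x₂ * B)) :
    (x₂ * y₁ * (x₁ * y₂)⁻¹) ^ p ^ 3 = x₂ * y₁ * (x₁ * y₂)⁻¹ := by
  subst h1 h2
  have key : x₂ * (S * (x₁ * A)) * (x₁ * (S * (x₂ * B)))⁻¹ = A * B⁻¹ := by
    field_simp
  rw [key, mul_pow, inv_pow, hA, hB]

/-! ### Vector evaluation helper lemmas -/

@[simp] lemma vec6_five (a b c d e f : W) : (![a,b,c,d,e,f] : Fin 6 → W) (5 : Fin 6) = f := rfl
@[simp] lemma vec6_four (a b c d e f : W) : (![a,b,c,d,e,f] : Fin 6 → W) (4 : Fin 6) = e := rfl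
@[simp] lemma vec6_three (a b c d e f : W) : (![a,b,c,d,e,f] : Fin 6 → W) (3 : Fin 6) = d := rfl
@[simp] lemma vec6_two (a b c d e f : W) : (![a,b,c,d,e,f] : Fin 6 → W) (2 : Fin 6) = c := rfl
@[simp] lemma vec6_one (a b c d e f : W) : (![a,b,c,d,e,f] : Fin 6 → W) (1 : Fin 6) = b := rfl
@[simp] lemma vec6_zero (a b c d e f : W) : (![a,b,c,d,e,f] : Fin 6 → W) (0 : Fin 6) = a := rfl

/-! ### Membership lemmas -/

lemma mem_FVN_iff (m : Fin 6 → W) : m ∈ FVN p k ↔ m 0 ∈ pW ∧ m 3 ∈ pW := by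
  simp [FVN, Submodule.mem_inf]

lemma mem_Mmod_iff (x₁ x₂ : k) (hx₁ : x₁ ≠ 0) (m : Fin 6 → W) :
    m ∈ Mmod p k (x₁, x₂) ↔ τ x₁ * m 3 - τ x₂ * m 0 ∈ pW := by
  constructor
  · intro hm
    obtain ⟨f, hf, s, hs, rfl⟩ := Submodule.mem_sup.mp hm
    obtain ⟨t, rfl⟩ := Submodule.mem_span_singleton.mp hs
    rw [mem_FVN_iff] at hf
    have h3 : (f + t • gen p k (x₁, x₂)) 3 = f 3 + t * τ x₂ := by
      simp [gen]
    have h0 : (f + t • gen p k (x₁, x₂)) 0 = f 0 + t * τ x₁ := by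
      simp [gen]
    rw [h3, h0]
    have heq : τ x₁ * (f 3 + t * τ x₂) - τ x₂ * (f 0 + t * τ x₁)
        = τ x₁ * f 3 - τ x₂ * f 0 := by ring
    rw [heq]
    exact Submodule.sub_mem _ (Ideal.mul_mem_left _ _ hf.2) (Ideal.mul_mem_left _ _ hf.1)
  · intro hm
    apply Submodule.mem_sup.mpr
    refine ⟨m - (τ x₁⁻¹ * m 0) • gen p k (x₁, x₂), ?_, (τ x₁⁻¹ * m 0) • gen p k (x₁, x₂),
      Submodule.mem_span_singleton.mpr ⟨_, rfl⟩, by abel⟩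
    rw [mem_FVN_iff]
    constructor
    · have h0 : (m - (τ x₁⁻¹ * m 0) • gen p k (x₁, x₂)) 0
          = m 0 - τ x₁⁻¹ * m 0 * τ x₁ := by simp [gen]
      rw [h0]
      have heq : m 0 - τ x₁⁻¹ * m 0 * τ x₁ = m 0 * (1 - τ x₁⁻¹ * τ x₁) := by ring
      rw [heq, mul_comm (τ x₁⁻¹), teich_mul_teich_inv p k x₁ hx₁]
      simp
    · have h3 : (m - (τ x₁⁻¹ * m 0) • gen p k (x₁, x₂)) 3
          = m 3 - τ x₁⁻¹ * m 0 * τ x₂ := by simp [gen]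
      rw [h3]
      have heq : m 3 - τ x₁⁻¹ * m 0 * τ x₂ = τ x₁⁻¹ * (τ x₁ * m 3 - τ x₂ * m 0)
          + (1 - τ x₁⁻¹ * τ x₁) * m 3 := by ring
      rw [heq, mul_comm (τ x₁⁻¹) (τ x₁), teich_mul_teich_inv p k x₁ hx₁]
      simpa using Ideal.mul_mem_left _ _ hm

/-! ### Operator lemmas -/

lemma p_mul_mem_pW (a : W) : (p : W) * a ∈ pW :=
  Ideal.mem_span_singleton.mpr (dvd_mul_right _ _)

lemma pcancel {a b : W} (h : (p : W) * a = (p : W) * b) : a = b :=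
  mul_left_cancel₀ (WittVector.p_nonzero p k) h

lemma Fop_psmul (x : Fin 6 → W) : Fop p k ((p : W) • x) = (p : W) • Fop p k x := by
  funext i
  fin_cases i <;>
    simp [Fop, Pi.smul_apply, smul_eq_mul, map_mul, sigma_p, vec6_five, vec6_four, vec6_three,
      vec6_two, vec6_one, vec6_zero] <;> ring

lemma Vop_psmul (x : Fin 6 → W) : Vop p k ((p : W) • x) = (p : W) • Vop p k x := by
  funext i
  fin_cases i <;>
    simp [Vop, Pi.smul_apply, smul_eq_mul, map_mul, sigma_symm_p, vec6_five, vec6_four,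
      vec6_three, vec6_two, vec6_one, vec6_zero] <;> ring

lemma Fop_mem_FVN (x : Fin 6 → W) : Fop p k x ∈ FVN p k := by
  rw [mem_FVN_iff]
  exact ⟨p_mul_mem_pW p k _, p_mul_mem_pW p k _⟩

lemma Vop_mem_FVN (x : Fin 6 → W) : Vop p k x ∈ FVN p k := by
  rw [mem_FVN_iff]
  exact ⟨p_mul_mem_pW p k _, p_mul_mem_pW p k _⟩

lemma FVN_le_Mmod (x : k × k) : FVN p k ≤ Mmod p k x := le_sup_left

lemma psmul_mem_Mmod (x : k × k) (n : Fin 6 → W) : (p : W) • n ∈ Mmod p k x := by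
  apply FVN_le_Mmod
  rw [mem_FVN_iff]
  exact ⟨p_mul_mem_pW p k _, p_mul_mem_pW p k _⟩

lemma exists_div (m : Fin 6 → W) (h : ∀ i, m i ∈ pW) : ∃ u, m = (p : W) • u := by
  choose u hu using fun i => Ideal.mem_span_singleton.mp (h i)
  exact ⟨u, funext hu⟩

lemma psmul_cancel {u u' : Fin 6 → W} (h : (p : W) • u = (p : W) • u') : u = u' :=
  funext fun i => pcancel p k (congrFun h i)

lemma coords_in_pW (y₁ y₂ : k) (hy₁ : y₁ ≠ 0) (hy₂ : y₂ ≠ 0) (m u u' : Fin 6 → W)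
    (hu : u ∈ Mmod p k (y₁, y₂)) (hu' : u' ∈ Mmod p k (y₁, y₂))
    (hF : Fop p k m = (p : W) • u) (hV : Vop p k m = (p : W) • u') :
    ∀ i, m i ∈ pW := by
  have hF2 : σ p k (m 0) = (p : W) * u 2 := congrFun hF 2
  have hF4 : σ p k (m 3) = (p : W) * u 4 := congrFun hF 4
  have hF5 : σ p k (m 4) = (p : W) * u 5 := congrFun hF 5
  have hF0 : (p : W) * σ p k (m 1) = (p : W) * u 0 := congrFun hF 0
  have hF3 : (p : W) * σ p k (m 5) = (p : W) * u 3 := congrFun hF 3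
  have hV2 : (σ p k).symm (m 1) = (p : W) * u' 2 := congrFun hV 2
  have hV0 : (p : W) * (σ p k).symm (m 2) = (p : W) * u' 0 := congrFun hV 0
  have hV3 : (p : W) * (σ p k).symm (m 4) = (p : W) * u' 3 := congrFun hV 3
  have hm0 : m 0 ∈ pW := by
    rw [← sigma_mem_pW_iff, hF2]; exact p_mul_mem_pW p k _
  have hm3 : m 3 ∈ pW := by
    rw [← sigma_mem_pW_iff, hF4]; exact p_mul_mem_pW p k _
  have hm4 : m 4 ∈ pW := by
    rw [← sigma_mem_pW_iff, hF5]; exact p_mul_mem_pW p k _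
  have hm1 : m 1 ∈ pW := by
    rw [← sigma_symm_mem_pW_iff, hV2]; exact p_mul_mem_pW p k _
  have hcongF : τ y₁ * σ p k (m 5) - τ y₂ * σ p k (m 1) ∈ pW := by
    have hms := (mem_Mmod_iff p k y₁ y₂ hy₁ u).mp hu
    rwa [← pcancel p k hF3, ← pcancel p k hF0] at hms
  have hcongV : τ y₁ * (σ p k).symm (m 4) - τ y₂ * (σ p k).symm (m 2) ∈ pW := by
    have hms := (mem_Mmod_iff p k y₁ y₂ hy₁ u').mp hu'
    rwa [← pcancel p k hV3, ← pcancel p k hV0] at hms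
  have hm2 : m 2 ∈ pW := by
    rw [← sigma_symm_mem_pW_iff, ← teich_mul_mem_pW_iff p k y₂ hy₂]
    have h1 : τ y₁ * (σ p k).symm (m 4) ∈ pW :=
      Ideal.mul_mem_left _ _ ((sigma_symm_mem_pW_iff p k _).mpr hm4)
    have h2 := Submodule.sub_mem _ h1 hcongV
    simpa using h2
  have hm5 : m 5 ∈ pW := by
    rw [← sigma_mem_pW_iff, ← teich_mul_mem_pW_iff p k y₁ hy₁]
    have h1 : τ y₂ * σ p k (m 1) ∈ pW :=
      Ideal.mul_mem_left _ _ ((sigma_mem_pW_iff p k _).mpr hm1)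
    have h2 := Submodule.add_mem _ hcongF h1
    simpa using h2
  intro i
  fin_cases i <;> assumption

def e0 : Fin 6 → W := ![1,0,0,0,0,0]
def e1 : Fin 6 → W := ![0,1,0,0,0,0]
def e2 : Fin 6 → W := ![0,0,1,0,0,0]
def e3 : Fin 6 → W := ![0,0,0,1,0,0]
def e4 : Fin 6 → W := ![0,0,0,0,1,0]
def e5 : Fin 6 → W := ![0,0,0,0,0,1]

lemma Fop_e0 : Fop p k (e0 p k) = e2 p k := by
  funext i; fin_cases i <;> simp [Fop, e0, e2]

lemma Fop_e1 : Fop p k (e1 p k) = (p : W) • e0 p k := by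
  funext i; fin_cases i <;> simp [Fop, e0, e1]

lemma Fop_e2 : Fop p k (e2 p k) = (p : W) • e1 p k := by
  funext i; fin_cases i <;> simp [Fop, e1, e2]

lemma Fop_e3 : Fop p k (e3 p k) = e4 p k := by
  funext i; fin_cases i <;> simp [Fop, e3, e4]

lemma Fop_e4 : Fop p k (e4 p k) = e5 p k := by
  funext i; fin_cases i <;> simp [Fop, e4, e5]

lemma Fop_e5 : Fop p k (e5 p k) = (p : W) • e3 p k := by
  funext i; fin_cases i <;> simp [Fop, e3, e5]

lemma FVN_decomp (f : Fin 6 → W) (hf : f ∈ FVN p k) :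
    ∃ n n' : Fin 6 → W, f = Fop p k n + Vop p k n' := by
  obtain ⟨hf0, hf3⟩ := (mem_FVN_iff p k f).mp hf
  obtain ⟨a, ha⟩ := Ideal.mem_span_singleton.mp hf0
  obtain ⟨b, hb⟩ := Ideal.mem_span_singleton.mp hf3
  refine ⟨![(σ p k).symm (f 2), (σ p k).symm a, 0, (σ p k).symm (f 4), (σ p k).symm (f 5),
      (σ p k).symm b], ![σ p k (f 1), 0, 0, 0, 0, 0], ?_⟩
  funext i
  fin_cases i <;>
    simp [Fop, Vop, RingEquiv.apply_symm_apply, RingEquiv.symm_apply_apply, ha, hb]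

lemma gen_decomp (x₁ x₂ : k) :
    gen p k (x₁, x₂) = τ x₁ • e0 p k + τ x₂ • e3 p k := by
  funext i; fin_cases i <;> simp [gen, e0, e3]

section Forward

variable (x₁ x₂ y₁ y₂ : k)
variable (v : ↥(Mmod p k (x₁, x₂)) ≃ₗ[WittVector p k] ↥(Mmod p k (y₁, y₂)))

def vp (n : Fin 6 → W) : Fin 6 → W :=
  (v ⟨(p : W) • n, psmul_mem_Mmod p k _ n⟩ : Fin 6 → W)

lemma vp_of_mem (e : ↥(Mmod p k (x₁, x₂))) :
    vp p k x₁ x₂ y₁ y₂ v (↑e) = (p : W) • (v e : Fin 6 → W) := by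
  unfold vp
  have h : (⟨(p : W) • (↑e : Fin 6 → W), psmul_mem_Mmod p k _ _⟩ : ↥(Mmod p k (x₁, x₂)))
      = (p : W) • e := Subtype.ext rfl
  rw [h, map_smul]
  rfl

open scoped Classical in
def vt (n : Fin 6 → W) : Fin 6 → W :=
  if h : ∃ u, vp p k x₁ x₂ y₁ y₂ v n = (p : W) • u then h.choose else 0

variable (hy₁ : y₁ ≠ 0) (hy₂ : y₂ ≠ 0)
variable (hMF : ∀ z ∈ Mmod p k (x₁, x₂), Fop p k z ∈ Mmod p k (x₁, x₂))
variable (hMV : ∀ z ∈ Mmod p k (x₁, x₂), Vop p k z ∈ Mmod p k (x₁, x₂))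
variable (hvF : ∀ m : ↥(Mmod p k (x₁, x₂)),
      (v ⟨Fop p k (m : Fin 6 → WittVector p k), hMF _ m.2⟩ : Fin 6 → WittVector p k)
        = Fop p k (v m : Fin 6 → WittVector p k))
variable (hvV : ∀ m : ↥(Mmod p k (x₁, x₂)),
      (v ⟨Vop p k (m : Fin 6 → WittVector p k), hMV _ m.2⟩ : Fin 6 → WittVector p k)
        = Vop p k (v m : Fin 6 → WittVector p k))

include hy₁ hy₂ hvF hvV

lemma vp_div (n : Fin 6 → W) : ∀ i, vp p k x₁ x₂ y₁ y₂ v n i ∈ pW := by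
  apply coords_in_pW p k y₁ y₂ hy₁ hy₂ _
      (v ⟨Fop p k n, FVN_le_Mmod p k _ (Fop_mem_FVN p k n)⟩ : Fin 6 → W)
      (v ⟨Vop p k n, FVN_le_Mmod p k _ (Vop_mem_FVN p k n)⟩ : Fin 6 → W)
      (v _).2 (v _).2
  · have h1 := hvF ⟨(p : W) • n, psmul_mem_Mmod p k _ n⟩
    have h2 : (⟨Fop p k ((p : W) • n), hMF _ (psmul_mem_Mmod p k _ n)⟩ : ↥(Mmod p k (x₁, x₂)))
        = (p : W) • ⟨Fop p k n, FVN_le_Mmod p k _ (Fop_mem_FVN p k n)⟩ :=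
      Subtype.ext (Fop_psmul p k n)
    rw [h2] at h1
    show Fop p k (vp p k x₁ x₂ y₁ y₂ v n) = _
    unfold vp
    rw [← h1, map_smul]
    rfl
  · have h1 := hvV ⟨(p : W) • n, psmul_mem_Mmod p k _ n⟩
    have h2 : (⟨Vop p k ((p : W) • n), hMV _ (psmul_mem_Mmod p k _ n)⟩ : ↥(Mmod p k (x₁, x₂)))
        = (p : W) • ⟨Vop p k n, FVN_le_Mmod p k _ (Vop_mem_FVN p k n)⟩ :=
      Subtype.ext (Vop_psmul p k n)
    rw [h2] at h1
    show Vop p k (vp p k x₁ x₂ y₁ y₂ v n) = _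
    unfold vp
    rw [← h1, map_smul]
    rfl

lemma vt_spec (n : Fin 6 → W) :
    vp p k x₁ x₂ y₁ y₂ v n = (p : W) • vt p k x₁ x₂ y₁ y₂ v n := by
  have hex : ∃ u, vp p k x₁ x₂ y₁ y₂ v n = (p : W) • u :=
    exists_div p k _ (vp_div p k x₁ x₂ y₁ y₂ v hy₁ hy₂ hMF hMV hvF hvV n)
  unfold vt
  rw [dif_pos hex]
  exact hex.choose_spec

lemma vt_of_mem (e : ↥(Mmod p k (x₁, x₂))) :
    vt p k x₁ x₂ y₁ y₂ v (↑e) = (v e : Fin 6 → W) := by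
  apply psmul_cancel p k
  rw [← vt_spec p k x₁ x₂ y₁ y₂ v hy₁ hy₂ hMF hMV hvF hvV,
    vp_of_mem]

lemma vt_add (n n' : Fin 6 → W) :
    vt p k x₁ x₂ y₁ y₂ v (n + n') = vt p k x₁ x₂ y₁ y₂ v n + vt p k x₁ x₂ y₁ y₂ v n' := by
  apply psmul_cancel p k
  rw [smul_add, ← vt_spec p k x₁ x₂ y₁ y₂ v hy₁ hy₂ hMF hMV hvF hvV,
    ← vt_spec p k x₁ x₂ y₁ y₂ v hy₁ hy₂ hMF hMV hvF hvV,
    ← vt_spec p k x₁ x₂ y₁ y₂ v hy₁ hy₂ hMF hMV hvF hvV]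
  unfold vp
  have h : (⟨(p : W) • (n + n'), psmul_mem_Mmod p k _ _⟩ : ↥(Mmod p k (x₁, x₂)))
      = ⟨(p : W) • n, psmul_mem_Mmod p k _ _⟩ + ⟨(p : W) • n', psmul_mem_Mmod p k _ _⟩ :=
    Subtype.ext (smul_add _ _ _)
  rw [h, map_add]
  rfl

lemma vt_smul (a : W) (n : Fin 6 → W) :
    vt p k x₁ x₂ y₁ y₂ v (a • n) = a • vt p k x₁ x₂ y₁ y₂ v n := by
  apply psmul_cancel p k
  rw [smul_comm (p : W) a, ← vt_spec p k x₁ x₂ y₁ y₂ v hy₁ hy₂ hMF hMV hvF hvV,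
    ← vt_spec p k x₁ x₂ y₁ y₂ v hy₁ hy₂ hMF hMV hvF hvV]
  unfold vp
  have h : (⟨(p : W) • (a • n), psmul_mem_Mmod p k _ _⟩ : ↥(Mmod p k (x₁, x₂)))
      = a • ⟨(p : W) • n, psmul_mem_Mmod p k _ _⟩ :=
    Subtype.ext (smul_comm _ _ _)
  rw [h, map_smul]
  rfl

lemma vt_F (n : Fin 6 → W) :
    vt p k x₁ x₂ y₁ y₂ v (Fop p k n) = Fop p k (vt p k x₁ x₂ y₁ y₂ v n) := by
  apply psmul_cancel p k
  rw [← vt_spec p k x₁ x₂ y₁ y₂ v hy₁ hy₂ hMF hMV hvF hvV, ← Fop_psmul,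
    ← vt_spec p k x₁ x₂ y₁ y₂ v hy₁ hy₂ hMF hMV hvF hvV]
  unfold vp
  have h2 : (⟨(p : W) • Fop p k n, psmul_mem_Mmod p k _ _⟩ : ↥(Mmod p k (x₁, x₂)))
      = ⟨Fop p k ((p : W) • n), hMF _ (psmul_mem_Mmod p k _ n)⟩ :=
    Subtype.ext (Fop_psmul p k n).symm
  rw [h2]
  exact hvF ⟨(p : W) • n, psmul_mem_Mmod p k _ n⟩

lemma vt_V (n : Fin 6 → W) :
    vt p k x₁ x₂ y₁ y₂ v (Vop p k n) = Vop p k (vt p k x₁ x₂ y₁ y₂ v n) := by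
  apply psmul_cancel p k
  rw [← vt_spec p k x₁ x₂ y₁ y₂ v hy₁ hy₂ hMF hMV hvF hvV, ← Vop_psmul,
    ← vt_spec p k x₁ x₂ y₁ y₂ v hy₁ hy₂ hMF hMV hvF hvV]
  unfold vp
  have h2 : (⟨(p : W) • Vop p k n, psmul_mem_Mmod p k _ _⟩ : ↥(Mmod p k (x₁, x₂)))
      = ⟨Vop p k ((p : W) • n), hMV _ (psmul_mem_Mmod p k _ n)⟩ :=
    Subtype.ext (Vop_psmul p k n).symm
  rw [h2]
  exact hvV ⟨(p : W) • n, psmul_mem_Mmod p k _ n⟩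

end Forward

section Forward2

variable (x₁ x₂ y₁ y₂ : k)
variable (v : ↥(Mmod p k (x₁, x₂)) ≃ₗ[WittVector p k] ↥(Mmod p k (y₁, y₂)))
variable (hy₁ : y₁ ≠ 0) (hy₂ : y₂ ≠ 0)
variable (hMF : ∀ z ∈ Mmod p k (x₁, x₂), Fop p k z ∈ Mmod p k (x₁, x₂))
variable (hMV : ∀ z ∈ Mmod p k (x₁, x₂), Vop p k z ∈ Mmod p k (x₁, x₂))
variable (hvF : ∀ m : ↥(Mmod p k (x₁, x₂)),
      (v ⟨Fop p k (m : Fin 6 → WittVector p k), hMF _ m.2⟩ : Fin 6 → WittVector p k)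
        = Fop p k (v m : Fin 6 → WittVector p k))
variable (hvV : ∀ m : ↥(Mmod p k (x₁, x₂)),
      (v ⟨Vop p k (m : Fin 6 → WittVector p k), hMV _ m.2⟩ : Fin 6 → WittVector p k)
        = Vop p k (v m : Fin 6 → WittVector p k))

include hy₁ hy₂ hvF hvV

lemma g_facts :
    (vt p k x₁ x₂ y₁ y₂ v (e0 p k) 0
        = σ p k (σ p k (σ p k (vt p k x₁ x₂ y₁ y₂ v (e0 p k) 0)))) ∧
    (vt p k x₁ x₂ y₁ y₂ v (e3 p k) 3
        = σ p k (σ p k (σ p k (vt p k x₁ x₂ y₁ y₂ v (e3 p k) 3)))) ∧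
    vt p k x₁ x₂ y₁ y₂ v (e3 p k) 0 = 0 ∧
    vt p k x₁ x₂ y₁ y₂ v (e0 p k) 3 = 0 := by
  have A1 : vt p k x₁ x₂ y₁ y₂ v (e2 p k) = Fop p k (vt p k x₁ x₂ y₁ y₂ v (e0 p k)) := by
    have h := vt_F p k x₁ x₂ y₁ y₂ v hy₁ hy₂ hMF hMV hvF hvV (e0 p k)
    rwa [Fop_e0] at h
  have A2 : (p : W) • vt p k x₁ x₂ y₁ y₂ v (e0 p k)
      = Fop p k (vt p k x₁ x₂ y₁ y₂ v (e1 p k)) := by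
    have h := vt_F p k x₁ x₂ y₁ y₂ v hy₁ hy₂ hMF hMV hvF hvV (e1 p k)
    rwa [Fop_e1, vt_smul p k x₁ x₂ y₁ y₂ v hy₁ hy₂ hMF hMV hvF hvV] at h
  have A3 : (p : W) • vt p k x₁ x₂ y₁ y₂ v (e1 p k)
      = Fop p k (vt p k x₁ x₂ y₁ y₂ v (e2 p k)) := by
    have h := vt_F p k x₁ x₂ y₁ y₂ v hy₁ hy₂ hMF hMV hvF hvV (e2 p k)
    rwa [Fop_e2, vt_smul p k x₁ x₂ y₁ y₂ v hy₁ hy₂ hMF hMV hvF hvV] at h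
  have A4 : vt p k x₁ x₂ y₁ y₂ v (e4 p k) = Fop p k (vt p k x₁ x₂ y₁ y₂ v (e3 p k)) := by
    have h := vt_F p k x₁ x₂ y₁ y₂ v hy₁ hy₂ hMF hMV hvF hvV (e3 p k)
    rwa [Fop_e3] at h
  have A5 : vt p k x₁ x₂ y₁ y₂ v (e5 p k) = Fop p k (vt p k x₁ x₂ y₁ y₂ v (e4 p k)) := by
    have h := vt_F p k x₁ x₂ y₁ y₂ v hy₁ hy₂ hMF hMV hvF hvV (e4 p k)
    rwa [Fop_e4] at h
  have A6 : (p : W) • vt p k x₁ x₂ y₁ y₂ v (e3 p k)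
      = Fop p k (vt p k x₁ x₂ y₁ y₂ v (e5 p k)) := by
    have h := vt_F p k x₁ x₂ y₁ y₂ v hy₁ hy₂ hMF hMV hvF hvV (e5 p k)
    rwa [Fop_e5, vt_smul p k x₁ x₂ y₁ y₂ v hy₁ hy₂ hMF hMV hvF hvV] at h
  refine ⟨?_, ?_, ?_, ?_⟩
  · have h1 : vt p k x₁ x₂ y₁ y₂ v (e2 p k) 2 = σ p k (vt p k x₁ x₂ y₁ y₂ v (e0 p k) 0) :=
      congrFun A1 2
    have h2 : (p : W) * vt p k x₁ x₂ y₁ y₂ v (e1 p k) 1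
        = (p : W) * σ p k (vt p k x₁ x₂ y₁ y₂ v (e2 p k) 2) := congrFun A3 1
    have h3 : (p : W) * vt p k x₁ x₂ y₁ y₂ v (e0 p k) 0
        = (p : W) * σ p k (vt p k x₁ x₂ y₁ y₂ v (e1 p k) 1) := congrFun A2 0
    calc vt p k x₁ x₂ y₁ y₂ v (e0 p k) 0
        = σ p k (vt p k x₁ x₂ y₁ y₂ v (e1 p k) 1) := pcancel p k h3
      _ = σ p k (σ p k (vt p k x₁ x₂ y₁ y₂ v (e2 p k) 2)) := by rw [pcancel p k h2]
      _ = σ p k (σ p k (σ p k (vt p k x₁ x₂ y₁ y₂ v (e0 p k) 0))) := by rw [h1]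
  · have h1 : vt p k x₁ x₂ y₁ y₂ v (e4 p k) 4 = σ p k (vt p k x₁ x₂ y₁ y₂ v (e3 p k) 3) :=
      congrFun A4 4
    have h2 : vt p k x₁ x₂ y₁ y₂ v (e5 p k) 5 = σ p k (vt p k x₁ x₂ y₁ y₂ v (e4 p k) 4) :=
      congrFun A5 5
    have h3 : (p : W) * vt p k x₁ x₂ y₁ y₂ v (e3 p k) 3
        = (p : W) * σ p k (vt p k x₁ x₂ y₁ y₂ v (e5 p k) 5) := congrFun A6 3
    calc vt p k x₁ x₂ y₁ y₂ v (e3 p k) 3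
        = σ p k (vt p k x₁ x₂ y₁ y₂ v (e5 p k) 5) := pcancel p k h3
      _ = σ p k (σ p k (vt p k x₁ x₂ y₁ y₂ v (e4 p k) 4)) := by rw [h2]
      _ = σ p k (σ p k (σ p k (vt p k x₁ x₂ y₁ y₂ v (e3 p k) 3))) := by rw [h1]
  · have h1 : vt p k x₁ x₂ y₁ y₂ v (e4 p k) 2 = σ p k (vt p k x₁ x₂ y₁ y₂ v (e3 p k) 0) :=
      congrFun A4 2
    have h2 : vt p k x₁ x₂ y₁ y₂ v (e5 p k) 1
        = (p : W) * σ p k (vt p k x₁ x₂ y₁ y₂ v (e4 p k) 2) := congrFun A5 1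
    have h3 : (p : W) * vt p k x₁ x₂ y₁ y₂ v (e3 p k) 0
        = (p : W) * σ p k (vt p k x₁ x₂ y₁ y₂ v (e5 p k) 1) := congrFun A6 0
    have h4 := pcancel p k h3
    rw [h2, map_mul, map_natCast, h1] at h4
    exact eq_zero_of_self_eq_p_mul p k _
      (((σ p k : WittVector p k →+* WittVector p k).comp
        (σ p k : WittVector p k →+* WittVector p k)).comp
        (σ p k : WittVector p k →+* WittVector p k)) h4
  · have h1 : vt p k x₁ x₂ y₁ y₂ v (e2 p k) 4 = σ p k (vt p k x₁ x₂ y₁ y₂ v (e0 p k) 3) :=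
      congrFun A1 4
    have h2 : (p : W) * vt p k x₁ x₂ y₁ y₂ v (e1 p k) 5
        = σ p k (vt p k x₁ x₂ y₁ y₂ v (e2 p k) 4) := congrFun A3 5
    have h3 : (p : W) * vt p k x₁ x₂ y₁ y₂ v (e0 p k) 3
        = (p : W) * σ p k (vt p k x₁ x₂ y₁ y₂ v (e1 p k) 5) := congrFun A2 3
    have h4 : vt p k x₁ x₂ y₁ y₂ v (e0 p k) 3 = σ p k (vt p k x₁ x₂ y₁ y₂ v (e1 p k) 5) :=
      pcancel p k h3
    rw [h1, h4] at h2
    -- h2 : p * b = σ (σ (σ b))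
    have h6 := congrArg (fun t => (σ p k).symm ((σ p k).symm ((σ p k).symm t))) h2
    simp only [RingEquiv.symm_apply_apply, map_mul, map_natCast] at h6
    have h7 : vt p k x₁ x₂ y₁ y₂ v (e1 p k) 5 = 0 :=
      eq_zero_of_self_eq_p_mul p k _
        ((((σ p k).symm : WittVector p k →+* WittVector p k).comp
          ((σ p k).symm : WittVector p k →+* WittVector p k)).comp
          ((σ p k).symm : WittVector p k →+* WittVector p k)) h6.symm
    rw [h4, h7, map_zero]

lemma forward_final (hx₁ : x₁ ≠ 0) (hx₂ : x₂ ≠ 0) :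
    (x₂ * y₁ * (x₁ * y₂)⁻¹) ^ p ^ 3 = x₂ * y₁ * (x₁ * y₂)⁻¹ := by
  obtain ⟨hg00, hg33, hg03, hg30⟩ := g_facts p k x₁ x₂ y₁ y₂ v hy₁ hy₂ hMF hMV hvF hvV
  have hgy : gen p k (y₁, y₂) ∈ Mmod p k (y₁, y₂) :=
    Submodule.mem_sup_right (Submodule.mem_span_singleton_self _)
  set m : ↥(Mmod p k (x₁, x₂)) := v.symm ⟨gen p k (y₁, y₂), hgy⟩ with hm
  have hvm : (v m : Fin 6 → W) = gen p k (y₁, y₂) := by rw [hm, v.apply_symm_apply]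
  have hvtm : vt p k x₁ x₂ y₁ y₂ v (↑m) = gen p k (y₁, y₂) := by
    rw [vt_of_mem p k x₁ x₂ y₁ y₂ v hy₁ hy₂ hMF hMV hvF hvV, hvm]
  obtain ⟨f, hf, s, hs, hsum⟩ := Submodule.mem_sup.mp m.2
  obtain ⟨t, rfl⟩ := Submodule.mem_span_singleton.mp hs
  obtain ⟨n, n', hnn⟩ := FVN_decomp p k f hf
  have expand : gen p k (y₁, y₂)
      = vt p k x₁ x₂ y₁ y₂ v f
        + t • (WittVector.teichmuller p x₁ • vt p k x₁ x₂ y₁ y₂ v (e0 p k)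
          + WittVector.teichmuller p x₂ • vt p k x₁ x₂ y₁ y₂ v (e3 p k)) := by
    rw [← hvtm, ← hsum,
      vt_add p k x₁ x₂ y₁ y₂ v hy₁ hy₂ hMF hMV hvF hvV,
      vt_smul p k x₁ x₂ y₁ y₂ v hy₁ hy₂ hMF hMV hvF hvV,
      gen_decomp,
      vt_add p k x₁ x₂ y₁ y₂ v hy₁ hy₂ hMF hMV hvF hvV,
      vt_smul p k x₁ x₂ y₁ y₂ v hy₁ hy₂ hMF hMV hvF hvV,
      vt_smul p k x₁ x₂ y₁ y₂ v hy₁ hy₂ hMF hMV hvF hvV]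
  have hvf : vt p k x₁ x₂ y₁ y₂ v f
      = Fop p k (vt p k x₁ x₂ y₁ y₂ v n) + Vop p k (vt p k x₁ x₂ y₁ y₂ v n') := by
    rw [hnn, vt_add p k x₁ x₂ y₁ y₂ v hy₁ hy₂ hMF hMV hvF hvV,
      vt_F p k x₁ x₂ y₁ y₂ v hy₁ hy₂ hMF hMV hvF hvV,
      vt_V p k x₁ x₂ y₁ y₂ v hy₁ hy₂ hMF hMV hvF hvV]
  have hvf0 : WittVector.constantCoeff (vt p k x₁ x₂ y₁ y₂ v f 0) = 0 := by
    rw [← mem_pW_iff, congrFun hvf 0]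
    exact Submodule.add_mem _ (p_mul_mem_pW p k _) (p_mul_mem_pW p k _)
  have hvf3 : WittVector.constantCoeff (vt p k x₁ x₂ y₁ y₂ v f 3) = 0 := by
    rw [← mem_pW_iff, congrFun hvf 3]
    exact Submodule.add_mem _ (p_mul_mem_pW p k _) (p_mul_mem_pW p k _)
  have hc0 : WittVector.teichmuller p y₁
      = vt p k x₁ x₂ y₁ y₂ v f 0
        + t * (WittVector.teichmuller p x₁ * vt p k x₁ x₂ y₁ y₂ v (e0 p k) 0
          + WittVector.teichmuller p x₂ * vt p k x₁ x₂ y₁ y₂ v (e3 p k) 0) := congrFun expand 0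
  have hc3 : WittVector.teichmuller p y₂
      = vt p k x₁ x₂ y₁ y₂ v f 3
        + t * (WittVector.teichmuller p x₁ * vt p k x₁ x₂ y₁ y₂ v (e0 p k) 3
          + WittVector.teichmuller p x₂ * vt p k x₁ x₂ y₁ y₂ v (e3 p k) 3) := congrFun expand 3
  rw [hg03, mul_zero, add_zero] at hc0
  rw [hg30, mul_zero, zero_add] at hc3
  have r0 := congrArg WittVector.constantCoeff hc0
  have r3 := congrArg WittVector.constantCoeff hc3
  simp only [map_add, map_mul, hvf0, hvf3, res_teich, zero_add] at r0 r3
  -- r0 : y₁ = constantCoeff t * (x₁ * constantCoeff g00)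
  -- r3 : y₂ = constantCoeff t * (x₂ * constantCoeff g33)
  have hA : (WittVector.constantCoeff (vt p k x₁ x₂ y₁ y₂ v (e0 p k) 0)) ^ p ^ 3
      = WittVector.constantCoeff (vt p k x₁ x₂ y₁ y₂ v (e0 p k) 0) := by
    have h := congrArg WittVector.constantCoeff hg00
    rw [res_sigma, res_sigma, res_sigma, pow_pow_pow] at h
    exact h.symm
  have hB : (WittVector.constantCoeff (vt p k x₁ x₂ y₁ y₂ v (e3 p k) 3)) ^ p ^ 3
      = WittVector.constantCoeff (vt p k x₁ x₂ y₁ y₂ v (e3 p k) 3) := by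
    have h := congrArg WittVector.constantCoeff hg33
    rw [res_sigma, res_sigma, res_sigma, pow_pow_pow] at h
    exact h.symm
  have hy₁' := hy₁
  have hy₂' := hy₂
  rw [r0] at hy₁'
  rw [r3] at hy₂'
  obtain ⟨ht0, hx₁A⟩ := mul_ne_zero_iff.mp hy₁'
  obtain ⟨-, hA0⟩ := mul_ne_zero_iff.mp hx₁A
  obtain ⟨-, hx₂B⟩ := mul_ne_zero_iff.mp hy₂'
  obtain ⟨-, hB0⟩ := mul_ne_zero_iff.mp hx₂B
  exact final_algebra p k x₁ x₂ y₁ y₂ _ _ _ hx₁ hx₂ ht0 hA0 hB0 hA hB r0 r3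

end Forward2


section Backward

def diagMap (d : Fin 6 → W) : (Fin 6 → W) →ₗ[W] (Fin 6 → W) where
  toFun m := fun i => d i * m i
  map_add' m m' := by funext i; simp; ring
  map_smul' c m := by funext i; simp; ring

variable (w : k)

def Dfwd : Fin 6 → W := ![1, 1, 1, τ w, τ w ^ p, τ w ^ p ^ 2]
def Dbwd : Fin 6 → W := ![1, 1, 1, τ w⁻¹, τ w⁻¹ ^ p, τ w⁻¹ ^ p ^ 2]

lemma diag_inv (hw0 : w ≠ 0) : ∀ i, Dfwd p k w i * Dbwd p k w i = 1 := by
  intro i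
  fin_cases i
  · show (1 : W) * 1 = 1; rw [one_mul]
  · show (1 : W) * 1 = 1; rw [one_mul]
  · show (1 : W) * 1 = 1; rw [one_mul]
  · show τ w * τ w⁻¹ = 1; exact teich_mul_teich_inv p k w hw0
  · show τ w ^ p * τ w⁻¹ ^ p = 1
    rw [← mul_pow, teich_mul_teich_inv p k w hw0, one_pow]
  · show τ w ^ p ^ 2 * τ w⁻¹ ^ p ^ 2 = 1
    rw [← mul_pow, teich_mul_teich_inv p k w hw0, one_pow]

def phiEquiv (hw0 : w ≠ 0) : (Fin 6 → W) ≃ₗ[W] (Fin 6 → W) :=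
  LinearEquiv.ofLinear (diagMap p k (Dfwd p k w)) (diagMap p k (Dbwd p k w))
    (by
      apply LinearMap.ext; intro m; funext i
      show Dfwd p k w i * (Dbwd p k w i * m i) = m i
      rw [← mul_assoc, diag_inv p k w hw0 i, one_mul])
    (by
      apply LinearMap.ext; intro m; funext i
      show Dbwd p k w i * (Dfwd p k w i * m i) = m i
      rw [← mul_assoc, mul_comm (Dbwd p k w i), diag_inv p k w hw0 i, one_mul])

lemma phiEquiv_apply (hw0 : w ≠ 0) (m : Fin 6 → W) (i : Fin 6) :
    phiEquiv p k w hw0 m i = Dfwd p k w i * m i := rfl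

lemma sT0 : σ p k (τ w) = τ w ^ p := by rw [sigma_teich, map_pow]

lemma sT1 : σ p k (τ w ^ p) = τ w ^ p ^ 2 := by
  rw [map_pow, sT0, ← pow_mul]
  congr 1
  ring

variable (hw : w ^ p ^ 3 = w)

include hw in
lemma sT2 : σ p k (τ w ^ p ^ 2) = τ w := by
  rw [map_pow, sT0, ← pow_mul]
  rw [show p * p ^ 2 = p ^ 3 from by ring, ← map_pow, hw]

include hw in
lemma sT0' : (σ p k).symm (τ w) = τ w ^ p ^ 2 :=
  ((σ p k).toEquiv.symm_apply_eq).mpr (sT2 p k w hw).symm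

lemma sT1' : (σ p k).symm (τ w ^ p) = τ w :=
  ((σ p k).toEquiv.symm_apply_eq).mpr (sT0 p k w).symm

lemma sT2' : (σ p k).symm (τ w ^ p ^ 2) = τ w ^ p :=
  ((σ p k).toEquiv.symm_apply_eq).mpr (sT1 p k w).symm

variable (hw0 : w ≠ 0)

include hw in
lemma phi_F (m : Fin 6 → W) :
    phiEquiv p k w hw0 (Fop p k m) = Fop p k (phiEquiv p k w hw0 m) := by
  funext i
  fin_cases i
  · show (1 : W) * ((p : W) * σ p k (m 1)) = (p : W) * σ p k ((1 : W) * m 1)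
    rw [one_mul, one_mul]
  · show (1 : W) * ((p : W) * σ p k (m 2)) = (p : W) * σ p k ((1 : W) * m 2)
    rw [one_mul, one_mul]
  · show (1 : W) * σ p k (m 0) = σ p k ((1 : W) * m 0)
    rw [one_mul, one_mul]
  · show τ w * ((p : W) * σ p k (m 5)) = (p : W) * σ p k (τ w ^ p ^ 2 * m 5)
    rw [map_mul, sT2 p k w hw]
    ring
  · show τ w ^ p * σ p k (m 3) = σ p k (τ w * m 3)
    rw [map_mul, sT0]
  · show τ w ^ p ^ 2 * σ p k (m 4) = σ p k (τ w ^ p * m 4)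
    rw [map_mul, sT1]

include hw in
lemma phi_V (m : Fin 6 → W) :
    phiEquiv p k w hw0 (Vop p k m) = Vop p k (phiEquiv p k w hw0 m) := by
  funext i
  fin_cases i
  · show (1 : W) * ((p : W) * (σ p k).symm (m 2)) = (p : W) * (σ p k).symm ((1 : W) * m 2)
    rw [one_mul, one_mul]
  · show (1 : W) * (σ p k).symm (m 0) = (σ p k).symm ((1 : W) * m 0)
    rw [one_mul, one_mul]
  · show (1 : W) * (σ p k).symm (m 1) = (σ p k).symm ((1 : W) * m 1)
    rw [one_mul, one_mul]
  · show τ w * ((p : W) * (σ p k).symm (m 4)) = (p : W) * (σ p k).symm (τ w ^ p * m 4)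
    rw [map_mul, sT1']
    ring
  · show τ w ^ p * ((p : W) * (σ p k).symm (m 5)) = (p : W) * (σ p k).symm (τ w ^ p ^ 2 * m 5)
    rw [map_mul, sT2']
    ring
  · show τ w ^ p ^ 2 * (σ p k).symm (m 3) = (σ p k).symm (τ w * m 3)
    rw [map_mul, sT0' p k w hw]

end Backward

section Backward2

variable (x₁ x₂ y₁ y₂ : k)

lemma phi_mem_fwd (hx₁ : x₁ ≠ 0) (hx₂ : x₂ ≠ 0) (hy₁ : y₁ ≠ 0)
    (w : k) (hw0 : w ≠ 0) (hrel : y₁ * w = y₂ * x₂⁻¹ * x₁)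
    (m : Fin 6 → W) (hm : m ∈ Mmod p k (x₁, x₂)) :
    phiEquiv p k w hw0 m ∈ Mmod p k (y₁, y₂) := by
  rw [mem_Mmod_iff p k y₁ y₂ hy₁]
  rw [mem_Mmod_iff p k x₁ x₂ hx₁] at hm
  have h3 : phiEquiv p k w hw0 m 3 = τ w * m 3 := rfl
  have h0 : phiEquiv p k w hw0 m 0 = 1 * m 0 := rfl
  rw [h3, h0, one_mul]
  have hco : τ y₁ * τ w = τ y₂ * τ x₂⁻¹ * τ x₁ := by
    rw [← map_mul, ← map_mul, ← map_mul, hrel]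
  have hco2 : τ y₂ * (τ x₂⁻¹ * τ x₂) = τ y₂ := by
    rw [mul_comm (τ x₂⁻¹), teich_mul_teich_inv p k x₂ hx₂, mul_one]
  have key : τ y₁ * (τ w * m 3) - τ y₂ * m 0
      = (τ y₂ * τ x₂⁻¹) * (τ x₁ * m 3 - τ x₂ * m 0) := by
    calc τ y₁ * (τ w * m 3) - τ y₂ * m 0
        = (τ y₁ * τ w) * m 3 - τ y₂ * m 0 := by ring
      _ = (τ y₂ * τ x₂⁻¹ * τ x₁) * m 3 - (τ y₂ * (τ x₂⁻¹ * τ x₂)) * m 0 := by rw [hco, hco2]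
      _ = (τ y₂ * τ x₂⁻¹) * (τ x₁ * m 3 - τ x₂ * m 0) := by ring
  rw [key]
  exact Ideal.mul_mem_left _ _ hm

lemma phi_mem_bwd (hx₁ : x₁ ≠ 0) (hy₁ : y₁ ≠ 0) (hy₂ : y₂ ≠ 0)
    (w : k) (hw0 : w ≠ 0) (hrel2 : x₁ * w⁻¹ = x₂ * y₂⁻¹ * y₁)
    (u : Fin 6 → W) (hu : u ∈ Mmod p k (y₁, y₂)) :
    (phiEquiv p k w hw0).symm u ∈ Mmod p k (x₁, x₂) := by
  rw [mem_Mmod_iff p k x₁ x₂ hx₁]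
  rw [mem_Mmod_iff p k y₁ y₂ hy₁] at hu
  have h3 : (phiEquiv p k w hw0).symm u 3 = τ w⁻¹ * u 3 := rfl
  have h0 : (phiEquiv p k w hw0).symm u 0 = 1 * u 0 := rfl
  rw [h3, h0, one_mul]
  have hco : τ x₁ * τ w⁻¹ = τ x₂ * τ y₂⁻¹ * τ y₁ := by
    rw [← map_mul, ← map_mul, ← map_mul, hrel2]
  have hco2 : τ x₂ * (τ y₂⁻¹ * τ y₂) = τ x₂ := by
    rw [mul_comm (τ y₂⁻¹), teich_mul_teich_inv p k y₂ hy₂, mul_one]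
  have key : τ x₁ * (τ w⁻¹ * u 3) - τ x₂ * u 0
      = (τ x₂ * τ y₂⁻¹) * (τ y₁ * u 3 - τ y₂ * u 0) := by
    calc τ x₁ * (τ w⁻¹ * u 3) - τ x₂ * u 0
        = (τ x₁ * τ w⁻¹) * u 3 - τ x₂ * u 0 := by ring
      _ = (τ x₂ * τ y₂⁻¹ * τ y₁) * u 3 - (τ x₂ * (τ y₂⁻¹ * τ y₂)) * u 0 := by rw [hco, hco2]
      _ = (τ x₂ * τ y₂⁻¹) * (τ y₁ * u 3 - τ y₂ * u 0) := by ring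
  rw [key]
  exact Ideal.mul_mem_left _ _ hu

lemma phi_map_eq (hx₁ : x₁ ≠ 0) (hx₂ : x₂ ≠ 0) (hy₁ : y₁ ≠ 0) (hy₂ : y₂ ≠ 0)
    (w : k) (hw0 : w ≠ 0) (hrel : y₁ * w = y₂ * x₂⁻¹ * x₁)
    (hrel2 : x₁ * w⁻¹ = x₂ * y₂⁻¹ * y₁) :
    (Mmod p k (x₁, x₂)).map
        (phiEquiv p k w hw0 : (Fin 6 → W) →ₗ[W] (Fin 6 → W)) = Mmod p k (y₁, y₂) := by
  apply le_antisymm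
  · intro u hu
    obtain ⟨m, hm, rfl⟩ := Submodule.mem_map.mp hu
    exact phi_mem_fwd p k x₁ x₂ y₁ y₂ hx₁ hx₂ hy₁ w hw0 hrel m hm
  · intro u hu
    exact Submodule.mem_map.mpr ⟨(phiEquiv p k w hw0).symm u,
      phi_mem_bwd p k x₁ x₂ y₁ y₂ hx₁ hy₁ hy₂ w hw0 hrel2 u hu,
      (phiEquiv p k w hw0).apply_symm_apply u⟩

end Backward2

/-- For `x₁, x₂, y₁, y₂ ∈ k^×`, the Dieudonné modules `M_{(x₁,x₂)}` and
`M_{(y₁,y₂)}` are isomorphic (a `W`-linear bijection commuting with `F` and `V`) if and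
only if `z = (x₂y₁)(x₁y₂)⁻¹ ∈ k^×` satisfies `z^{p³} = z`. -/
theorem stmt_10 (x₁ x₂ y₁ y₂ : k)
    (hx₁ : x₁ ≠ 0) (hx₂ : x₂ ≠ 0) (hy₁ : y₁ ≠ 0) (hy₂ : y₂ ≠ 0)
    (hMF : ∀ z ∈ Mmod p k (x₁, x₂), Fop p k z ∈ Mmod p k (x₁, x₂))
    (hMV : ∀ z ∈ Mmod p k (x₁, x₂), Vop p k z ∈ Mmod p k (x₁, x₂)) :
    (∃ v : ↥(Mmod p k (x₁, x₂)) ≃ₗ[WittVector p k] ↥(Mmod p k (y₁, y₂)),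
      (∀ m : ↥(Mmod p k (x₁, x₂)),
        (v ⟨Fop p k (m : Fin 6 → WittVector p k), hMF _ m.2⟩ : Fin 6 → WittVector p k)
          = Fop p k (v m : Fin 6 → WittVector p k)) ∧
      (∀ m : ↥(Mmod p k (x₁, x₂)),
        (v ⟨Vop p k (m : Fin 6 → WittVector p k), hMV _ m.2⟩ : Fin 6 → WittVector p k)
          = Vop p k (v m : Fin 6 → WittVector p k)))
    ↔ (x₂ * y₁ * (x₁ * y₂)⁻¹) ^ p ^ 3 = x₂ * y₁ * (x₁ * y₂)⁻¹ := by
  constructor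
  · rintro ⟨v, hvF, hvV⟩
    exact forward_final p k x₁ x₂ y₁ y₂ v hy₁ hy₂ hMF hMV hvF hvV hx₁ hx₂
  · intro hz
    have hz0 : x₂ * y₁ * (x₁ * y₂)⁻¹ ≠ 0 :=
      mul_ne_zero (mul_ne_zero hx₂ hy₁) (inv_ne_zero (mul_ne_zero hx₁ hy₂))
    set w : k := (x₂ * y₁ * (x₁ * y₂)⁻¹)⁻¹ with hwdef
    have hw0 : w ≠ 0 := inv_ne_zero hz0
    have hw : w ^ p ^ 3 = w := by rw [hwdef, inv_pow, hz]
    have hrel : y₁ * w = y₂ * x₂⁻¹ * x₁ := by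
      rw [hwdef]
      field_simp
    have hrel2 : x₁ * w⁻¹ = x₂ * y₂⁻¹ * y₁ := by
      rw [hwdef, inv_inv]
      field_simp
    refine ⟨(phiEquiv p k w hw0).ofSubmodules _ _
      (phi_map_eq p k x₁ x₂ y₁ y₂ hx₁ hx₂ hy₁ hy₂ w hw0 hrel hrel2), ?_, ?_⟩
    · intro m
      rw [LinearEquiv.ofSubmodules_apply, LinearEquiv.ofSubmodules_apply]
      exact phi_F p k w hw hw0 (↑m)
    · intro m
      rw [LinearEquiv.ofSubmodules_apply, LinearEquiv.ofSubmodules_apply]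
      exact phi_V p k w hw hw0 (↑m)



end Stmt10
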